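/- Let a, b, c₁, c₂ : ℝ → ℝ with a(x) > 0 for all x, let λ₁, λ₂ ∈ ℝ and θ ∈ [0,1]. Suppose φ₁, φ₂ : ℝ → ℝ are twice differentiable, strictly positive, and satisfy a·φᵢ'' + b·φᵢ' + (cᵢ + λᵢ)·φᵢ ≤ 0 pointwise for i = 1, 2. Then f := φ₁^θ · φ₂^(1-θ) is strictly positive and satisfies a·f'' + b·f' + (θc₁ + (1-θ)c₂ + θλ₁ + (1-θ)λ₂)·f ≤ 0 pointwise. -/

import Mathlib

/-!
With `ℓ = φ'/φ` the logarithmic derivative of a positive function, the supersolution inequality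
`a φ'' + b φ' + c φ ≤ 0` reads `a (ℓ' + ℓ²) + b ℓ + c ≤ 0`, an expression that is affine in `ℓ'`
and, since `a > 0`, convex in `ℓ`. The logarithmic derivative of `φ₁^θ φ₂^(1-θ)` is the convex
combination `θ ℓ₁ + (1-θ) ℓ₂`, so Jensen's inequality for `ℓ ↦ ℓ²` yields the claim.
-/

open Real

section LogDeriv

variable {φ φ₁ φ₂ : ℝ → ℝ} {x : ℝ}

theorem logDeriv_fun_rpow_const (hφ : DifferentiableAt ℝ φ x) (hx : 0 < φ x) (p : ℝ) :
    logDeriv (fun y => φ y ^ p) x = p * logDeriv φ x := by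
  rw [logDeriv_apply, logDeriv_apply, (hφ.hasDerivAt.rpow_const (Or.inl hx.ne')).deriv,
    rpow_sub_one hx.ne']
  field_simp

theorem logDeriv_rpow_mul_rpow (hφ₁ : DifferentiableAt ℝ φ₁ x) (hφ₂ : DifferentiableAt ℝ φ₂ x)
    (hx₁ : 0 < φ₁ x) (hx₂ : 0 < φ₂ x) (p q : ℝ) :
    logDeriv (fun y => φ₁ y ^ p * φ₂ y ^ q) x = p * logDeriv φ₁ x + q * logDeriv φ₂ x := by
  rw [logDeriv_mul (f := fun y => φ₁ y ^ p) (g := fun y => φ₂ y ^ q) x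
      (rpow_pos_of_pos hx₁ p).ne' (rpow_pos_of_pos hx₂ q).ne'
      (hφ₁.rpow_const (Or.inl hx₁.ne')) (hφ₂.rpow_const (Or.inl hx₂.ne')),
    logDeriv_fun_rpow_const hφ₁ hx₁, logDeriv_fun_rpow_const hφ₂ hx₂]

theorem deriv_eq_mul_logDeriv (hx : φ x ≠ 0) : deriv φ x = φ x * logDeriv φ x := by
  rw [logDeriv_apply, mul_div_cancel₀ _ hx]

theorem differentiableAt_logDeriv (hφ : DifferentiableAt ℝ φ x)
    (hφ' : DifferentiableAt ℝ (deriv φ) x) (hx : φ x ≠ 0) :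
    DifferentiableAt ℝ (logDeriv φ) x :=
  hφ'.div hφ hx

theorem deriv_deriv_eq_mul_logDeriv (hφ : DifferentiableAt ℝ φ x)
    (hφ' : DifferentiableAt ℝ (deriv φ) x) (hx : φ x ≠ 0) :
    deriv (deriv φ) x = φ x * (deriv (logDeriv φ) x + logDeriv φ x ^ 2) := by
  have hℓ : HasDerivAt (logDeriv φ)
      ((deriv (deriv φ) x * φ x - deriv φ x * deriv φ x) / φ x ^ 2) x :=
    hφ'.hasDerivAt.div hφ.hasDerivAt hx
  rw [hℓ.deriv, logDeriv_apply]
  field_simp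
  ring

theorem secondOrder_eq_mul_riccati (hφ : DifferentiableAt ℝ φ x)
    (hφ' : DifferentiableAt ℝ (deriv φ) x) (hx : φ x ≠ 0) (a b c : ℝ) :
    a * deriv (deriv φ) x + b * deriv φ x + c * φ x
      = φ x * (a * (deriv (logDeriv φ) x + logDeriv φ x ^ 2) + b * logDeriv φ x + c) := by
  rw [deriv_deriv_eq_mul_logDeriv hφ hφ' hx, deriv_eq_mul_logDeriv hx]
  ring

theorem riccati_nonpos_of_supersolution (hφ : DifferentiableAt ℝ φ x)
    (hφ' : DifferentiableAt ℝ (deriv φ) x) (hx : 0 < φ x) {a b c : ℝ}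
    (hs : a * deriv (deriv φ) x + b * deriv φ x + c * φ x ≤ 0) :
    a * (deriv (logDeriv φ) x + logDeriv φ x ^ 2) + b * logDeriv φ x + c ≤ 0 := by
  rw [secondOrder_eq_mul_riccati hφ hφ' hx.ne'] at hs
  exact nonpos_of_mul_nonpos_right hs hx

theorem logDeriv_rpow_mul_rpow_eq (hφ₁ : Differentiable ℝ φ₁) (hφ₂ : Differentiable ℝ φ₂)
    (hpos₁ : ∀ y, 0 < φ₁ y) (hpos₂ : ∀ y, 0 < φ₂ y) (p q : ℝ) :
    logDeriv (fun y => φ₁ y ^ p * φ₂ y ^ q) = fun y => p * logDeriv φ₁ y + q * logDeriv φ₂ y :=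
  funext fun y => logDeriv_rpow_mul_rpow (hφ₁ y) (hφ₂ y) (hpos₁ y) (hpos₂ y) p q

theorem differentiableAt_deriv_rpow_mul_rpow (hφ₁ : Differentiable ℝ φ₁)
    (hφ₂ : Differentiable ℝ φ₂) (hφ₁' : DifferentiableAt ℝ (deriv φ₁) x)
    (hφ₂' : DifferentiableAt ℝ (deriv φ₂) x) (hpos₁ : ∀ y, 0 < φ₁ y) (hpos₂ : ∀ y, 0 < φ₂ y)
    (p q : ℝ) : DifferentiableAt ℝ (deriv fun y => φ₁ y ^ p * φ₂ y ^ q) x := by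
  have hderiv : deriv (fun y => φ₁ y ^ p * φ₂ y ^ q)
      = fun y => φ₁ y ^ p * φ₂ y ^ q * (p * logDeriv φ₁ y + q * logDeriv φ₂ y) := by
    funext y
    have := hpos₁ y
    have := hpos₂ y
    rw [deriv_eq_mul_logDeriv (by positivity),
      logDeriv_rpow_mul_rpow (hφ₁ y) (hφ₂ y) (hpos₁ y) (hpos₂ y)]
  rw [hderiv]
  exact (((hφ₁ x).rpow_const (Or.inl (hpos₁ x).ne')).mul
      ((hφ₂ x).rpow_const (Or.inl (hpos₂ x).ne'))).mul
    (((differentiableAt_logDeriv (hφ₁ x) hφ₁' (hpos₁ x).ne').const_mul p).add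
      ((differentiableAt_logDeriv (hφ₂ x) hφ₂' (hpos₂ x).ne').const_mul q))

end LogDeriv

theorem riccati_convex_combination {a b A₁ A₂ u v d₁ d₂ θ : ℝ} (ha : 0 ≤ a)
    (hθ0 : 0 ≤ θ) (hθ1 : θ ≤ 1)
    (h₁ : a * (A₁ + u ^ 2) + b * u + d₁ ≤ 0) (h₂ : a * (A₂ + v ^ 2) + b * v + d₂ ≤ 0) :
    a * (θ * A₁ + (1 - θ) * A₂ + (θ * u + (1 - θ) * v) ^ 2) + b * (θ * u + (1 - θ) * v)
      + (θ * d₁ + (1 - θ) * d₂) ≤ 0 := by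
  have hjensen : (θ * u + (1 - θ) * v) ^ 2 ≤ θ * u ^ 2 + (1 - θ) * v ^ 2 := by
    simpa only [smul_eq_mul] using
      (even_two.convexOn_pow (𝕜 := ℝ)).2 (Set.mem_univ u) (Set.mem_univ v) hθ0
        (sub_nonneg.2 hθ1) (add_sub_cancel θ 1)
  nlinarith [mul_le_mul_of_nonneg_left hjensen ha, mul_nonneg hθ0 (neg_nonneg.2 h₁),
    mul_nonneg (sub_nonneg.2 hθ1) (neg_nonneg.2 h₂)]

theorem stmt_7 (a b c₁ c₂ : ℝ → ℝ) (ha : ∀ x, 0 < a x)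
    (lam₁ lam₂ θ : ℝ) (hθ0 : 0 ≤ θ) (hθ1 : θ ≤ 1)
    (φ₁ φ₂ : ℝ → ℝ)
    (h1 : ∀ x, DifferentiableAt ℝ φ₁ x) (h1' : ∀ x, DifferentiableAt ℝ (deriv φ₁) x)
    (h2 : ∀ x, DifferentiableAt ℝ φ₂ x) (h2' : ∀ x, DifferentiableAt ℝ (deriv φ₂) x)
    (hp1 : ∀ x, 0 < φ₁ x) (hp2 : ∀ x, 0 < φ₂ x)
    (hs1 : ∀ x, a x * deriv (deriv φ₁) x + b x * deriv φ₁ x + (c₁ x + lam₁) * φ₁ x ≤ 0)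
    (hs2 : ∀ x, a x * deriv (deriv φ₂) x + b x * deriv φ₂ x + (c₂ x + lam₂) * φ₂ x ≤ 0)
    (f : ℝ → ℝ) (hf : ∀ x, f x = (φ₁ x) ^ θ * (φ₂ x) ^ (1 - θ)) :
    (∀ x, 0 < f x) ∧
    (∀ x, a x * deriv (deriv f) x + b x * deriv f x
        + (θ * c₁ x + (1 - θ) * c₂ x + θ * lam₁ + (1 - θ) * lam₂) * f x ≤ 0) := by
  obtain rfl : f = fun y => φ₁ y ^ θ * φ₂ y ^ (1 - θ) := funext hf
  have hpos : ∀ x, 0 < φ₁ x ^ θ * φ₂ x ^ (1 - θ) := fun x =>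
    mul_pos (rpow_pos_of_pos (hp1 x) θ) (rpow_pos_of_pos (hp2 x) (1 - θ))
  refine ⟨hpos, fun x => ?_⟩
  have hℓ := logDeriv_rpow_mul_rpow_eq h1 h2 hp1 hp2 θ (1 - θ)
  have hℓ' : deriv (logDeriv fun y => φ₁ y ^ θ * φ₂ y ^ (1 - θ)) x
      = θ * deriv (logDeriv φ₁) x + (1 - θ) * deriv (logDeriv φ₂) x := by
    rw [hℓ]
    exact (((differentiableAt_logDeriv (h1 x) (h1' x) (hp1 x).ne').hasDerivAt.const_mul θ).add
      ((differentiableAt_logDeriv (h2 x) (h2' x) (hp2 x).ne').hasDerivAt.const_mul (1 - θ))).deriv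
  have hf_diff : DifferentiableAt ℝ (fun y => φ₁ y ^ θ * φ₂ y ^ (1 - θ)) x :=
    ((h1 x).rpow_const (Or.inl (hp1 x).ne')).mul ((h2 x).rpow_const (Or.inl (hp2 x).ne'))
  rw [secondOrder_eq_mul_riccati hf_diff
    (differentiableAt_deriv_rpow_mul_rpow h1 h2 (h1' x) (h2' x) hp1 hp2 θ (1 - θ)) (hpos x).ne',
    hℓ', hℓ]
  refine mul_nonpos_of_nonneg_of_nonpos (hpos x).le ?_
  have hconv := riccati_convex_combination (ha x).le hθ0 hθ1
    (riccati_nonpos_of_supersolution (h1 x) (h1' x) (hp1 x) (hs1 x))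
    (riccati_nonpos_of_supersolution (h2 x) (h2' x) (hp2 x) (hs2 x))
  linarith
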